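/- The space of infinitesimal deformations of a G₂-instanton A on a principal bundle over a nearly G₂ manifold (i.e., solutions ε of (d^A ε)·η = 0, (d^A)*ε = 0) is isomorphic to the kernel of the elliptic operator D^{−1,A} + 2·Id acting on Γ(Λ¹ ⊗ Ad P). -/

import Mathlib

/-!
On `Λ¹ ⊗ Ad P` the form `φ` acts on `ε·η` by `−1`, so `D^{−1,A} = D^{0,A} + 1/2` there and
`(D^{−1,A} + 2)(ε·η) = D^{0,A}(ε·η) + (5/2) ε·η = (d^A ε)·η + (d^A)*ε·η`.
The two terms lie in complementary summands of the spinor bundle and Clifford multiplication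
by `η` is injective on each, so the left side vanishes iff `(d^A ε)·η = 0` and `(d^A)*ε = 0`.
-/

section

variable {Ω0 Ω1 Ω2 S : Type*}
  [AddCommGroup Ω0] [Module ℝ Ω0] [AddCommGroup Ω1] [Module ℝ Ω1]
  [AddCommGroup Ω2] [Module ℝ Ω2] [AddCommGroup S] [Module ℝ S]

theorem map_add_two_smul_eq_add {dA : Ω1 →ₗ[ℝ] Ω2} {δA : Ω1 →ₗ[ℝ] Ω0}
    {c0 : Ω0 →ₗ[ℝ] S} {c1 : Ω1 →ₗ[ℝ] S} {c2 : Ω2 →ₗ[ℝ] S}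
    {D0 cφ : S →ₗ[ℝ] S} {Dm1 : Ω1 →ₗ[ℝ] Ω1}
    (hD0 : ∀ ε, D0 (c1 ε) = c2 (dA ε) + c0 (δA ε) - (5/2 : ℝ) • c1 ε)
    (hφ : ∀ ε, cφ (c1 ε) = -(c1 ε))
    (hDm1 : ∀ ε, c1 (Dm1 ε) = D0 (c1 ε) + ((-1 : ℝ)/2) • cφ (c1 ε)) (ε : Ω1) :
    c1 (Dm1 ε + (2 : ℝ) • ε) = c2 (dA ε) + c0 (δA ε) := by
  rw [map_add, map_smul, hDm1, hD0, hφ]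
  module

theorem add_eq_zero_iff_of_complement {c0 : Ω0 →ₗ[ℝ] S} {c2 : Ω2 →ₗ[ℝ] S}
    (hcompl : ∀ (β : Ω2) (f : Ω0), c2 β + c0 f = 0 → c2 β = 0 ∧ c0 f = 0)
    (hc0inj : ∀ f, c0 f = 0 → f = 0) (β : Ω2) (f : Ω0) :
    c2 β + c0 f = 0 ↔ c2 β = 0 ∧ f = 0 := by
  refine ⟨fun h => ?_, fun ⟨hβ, hf⟩ => by rw [hβ, hf, map_zero, add_zero]⟩
  obtain ⟨hβ, hf⟩ := hcompl β f h
  exact ⟨hβ, hc0inj f hf⟩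

end

/-- **Deformation space as a kernel.**  The space of infinitesimal deformations
of a G₂-instanton `A` on a principal bundle over a nearly G₂ manifold — i.e. the
solutions `ε` of `(d^A ε)·η = 0`, `(d^A)*ε = 0` — coincides (under the injective
identification `ε ↦ ε·η`) with the kernel of the elliptic operator
`D^{−1,A} + 2·Id` acting on `Γ(Λ¹ ⊗ Ad P)`.  Since `η` is parallel for `∇^{−1}`,
`D^{−1,A}` restricts to an operator `Dm1` on `Λ¹ ⊗ Ad P` via
`(D^{−1,A}ε)·η = D^{−1,A}(ε·η) = D^{0,A}(ε·η) − (1/2)φ·(ε·η)`. -/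
theorem deformation_space_eq_kernel {Ω0 Ω1 Ω2 S : Type*}
    [AddCommGroup Ω0] [Module ℝ Ω0] [AddCommGroup Ω1] [Module ℝ Ω1]
    [AddCommGroup Ω2] [Module ℝ Ω2] [AddCommGroup S] [Module ℝ S]
    (dA : Ω1 →ₗ[ℝ] Ω2) (δA : Ω1 →ₗ[ℝ] Ω0)
    (c0 : Ω0 →ₗ[ℝ] S) (c1 : Ω1 →ₗ[ℝ] S) (c2 : Ω2 →ₗ[ℝ] S)
    (D0 : S →ₗ[ℝ] S) (cφ : S →ₗ[ℝ] S)
    (Dm1 : Ω1 →ₗ[ℝ] Ω1)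
    (hD0 : ∀ ε, D0 (c1 ε) = c2 (dA ε) + c0 (δA ε) - (5/2 : ℝ) • c1 ε)
    (hφ : ∀ ε, cφ (c1 ε) = -(c1 ε))
    (hcompl : ∀ (β : Ω2) (f : Ω0), c2 β + c0 f = 0 → c2 β = 0 ∧ c0 f = 0)
    (hc0inj : ∀ f, c0 f = 0 → f = 0)
    (hc1inj : Function.Injective c1)
    (hDm1 : ∀ ε, c1 (Dm1 ε) = D0 (c1 ε) + ((-1 : ℝ)/2) • cφ (c1 ε)) :
    ∀ ε : Ω1, (c2 (dA ε) = 0 ∧ δA ε = 0) ↔ Dm1 ε + (2 : ℝ) • ε = 0 := by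
  intro ε
  rw [← map_eq_zero_iff c1 hc1inj, map_add_two_smul_eq_add hD0 hφ hDm1,
    add_eq_zero_iff_of_complement hcompl hc0inj]
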